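/- Let N, D be positive natural numbers and let Q_s, K_s be N × D real matrices all of whose entries lie in {0,1}. Let 𝟙 denote the N × D all-ones matrix and J the N × N all-ones matrix. Then the N × N matrix whose (m, n) entry is the normalized Hamming similarity between row m of Q_s and row n of K_s equals (1/2)·J + (1/(2·D))·(2·Q_s − 𝟙)·(2·K_s − 𝟙)ᵀ. -/
import Mathlib


/-- Normalized Hamming similarity between two (binary) vectors in `Fin D → ℝ`. -/
noncomputable def hammingSim {D : ℕ} (b b' : Fin D → ℝ) : ℝ :=
  1 - (1 / (D : ℝ)) * ((Finset.univ.filter (fun i => b i ≠ b' i)).card : ℝ)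

theorem stmt_9 (N D : ℕ) (hN : 0 < N) (hD : 0 < D)
    (Qs Ks : Matrix (Fin N) (Fin D) ℝ)
    (hQs : ∀ m i, Qs m i = 0 ∨ Qs m i = 1)
    (hKs : ∀ n i, Ks n i = 0 ∨ Ks n i = 1) :
    (Matrix.of fun m n : Fin N => hammingSim (Qs m) (Ks n))
      = (1 / 2 : ℝ) • (Matrix.of fun _ _ : Fin N => (1 : ℝ))
        + (1 / (2 * (D : ℝ))) •
            (((2 : ℝ) • Qs - Matrix.of fun (_ : Fin N) (_ : Fin D) => (1 : ℝ))
              * Matrix.transpose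
                  ((2 : ℝ) • Ks - Matrix.of fun (_ : Fin N) (_ : Fin D) => (1 : ℝ))) := by
  ext m n
  have hsum : ∑ i, ((2 : ℝ) * Qs m i - 1) * (2 * Ks n i - 1)
      = (D : ℝ) - 2 * ((Finset.univ.filter (fun i => Qs m i ≠ Ks n i)).card : ℝ) := by
    have : ∀ i : Fin D, ((2 : ℝ) * Qs m i - 1) * (2 * Ks n i - 1)
        = 1 - 2 * (if Qs m i ≠ Ks n i then (1 : ℝ) else 0) := by
      intro i
      rcases hQs m i with h1 | h1 <;> rcases hKs n i with h2 | h2 <;>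
        simp [h1, h2] <;> norm_num
    rw [Finset.sum_congr rfl (fun i _ => this i), Finset.sum_sub_distrib]
    simp
    rw [Finset.sum_ite, Finset.sum_const, Finset.sum_const]
    simp [mul_comm]
  have hD' : (D : ℝ) ≠ 0 := Nat.cast_ne_zero.mpr hD.ne'
  simp only [Matrix.add_apply, Matrix.smul_apply, Matrix.of_apply, Matrix.mul_apply,
    Matrix.sub_apply, Matrix.transpose_apply, smul_eq_mul, hammingSim]
  rw [hsum]
  field_simp
  ring
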